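/- arXiv:0807.3268 — 2 statements merged into one kernel-verified Lean document; each statement's English description precedes it below -/
import Mathlib

section
/- For all positive reals a, b, c, d, we have (d/b − c/a)(b − a) ≤ −(min(c,d))·(log(b/√d) − log(a/√c))² + (√d − √c)². -/
/-!
Write `c = s²`, `d = t²` and put `x = b / t`, `y = a / s`. The left-hand side equals
`(t - s)² - s t (x/y + y/x - 2)`, so the claim reduces to
`min (s², t²) · (log x - log y)² ≤ s t (x/y + y/x - 2)`, which holds factor by factor:
`min (s², t²) ≤ s t`, and with `u = log (x/y) / 2` the inequality `(log (x/y))² ≤ x/y + y/x - 2`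
reads `u² ≤ sinh² u`.
-/

open Real

lemma Real.sq_le_sinh_sq (x : ℝ) : x ^ 2 ≤ sinh x ^ 2 := by
  rcases le_total 0 x with hx | hx
  · exact pow_le_pow_left₀ hx (self_le_sinh_iff.2 hx) 2
  · have h := pow_le_pow_left₀ (neg_nonneg.2 hx) (self_le_sinh_iff.2 (neg_nonneg.2 hx)) 2
    rwa [sinh_neg, neg_sq, neg_sq] at h

lemma Real.log_sq_le_add_inv_sub_two {t : ℝ} (ht : 0 < t) : log t ^ 2 ≤ t + t⁻¹ - 2 := by
  have hcosh : cosh (2 * (log t / 2)) = (t + t⁻¹) / 2 := by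
    rw [mul_div_cancel₀ _ two_ne_zero, cosh_log ht]
  rw [cosh_two_mul, cosh_sq] at hcosh
  nlinarith [sq_le_sinh_sq (log t / 2)]

lemma Real.sq_log_sub_log_le {x y : ℝ} (hx : 0 < x) (hy : 0 < y) :
    (log x - log y) ^ 2 ≤ x / y + y / x - 2 := by
  rw [← log_div hx.ne' hy.ne', ← inv_div x y]
  exact log_sq_le_add_inv_sub_two (div_pos hx hy)

lemma min_sq_le_mul {s t : ℝ} (hs : 0 ≤ s) (ht : 0 ≤ t) : min (s ^ 2) (t ^ 2) ≤ s * t := by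
  rcases le_total s t with hst | hts
  · exact min_le_of_left_le (by nlinarith)
  · exact min_le_of_right_le (by nlinarith)

theorem stmt_0 (a b c d : ℝ) (ha : 0 < a) (hb : 0 < b) (hc : 0 < c) (hd : 0 < d) :
    (d / b - c / a) * (b - a) ≤
      -(min c d) * (Real.log (b / Real.sqrt d) - Real.log (a / Real.sqrt c)) ^ 2
        + (Real.sqrt d - Real.sqrt c) ^ 2 := by
  obtain ⟨s, hs, rfl⟩ : ∃ s, 0 < s ∧ c = s ^ 2 := ⟨√c, sqrt_pos.2 hc, (sq_sqrt hc.le).symm⟩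
  obtain ⟨t, ht, rfl⟩ : ∃ t, 0 < t ∧ d = t ^ 2 := ⟨√d, sqrt_pos.2 hd, (sq_sqrt hd.le).symm⟩
  rw [sqrt_sq hs.le, sqrt_sq ht.le]
  have hx : 0 < b / t := div_pos hb ht
  have hy : 0 < a / s := div_pos ha hs
  have hlhs : (t ^ 2 / b - s ^ 2 / a) * (b - a)
      = (t - s) ^ 2 - s * t * ((b / t) / (a / s) + (a / s) / (b / t) - 2) := by
    field_simp
    ring
  have key : min (s ^ 2) (t ^ 2) * (log (b / t) - log (a / s)) ^ 2
      ≤ s * t * ((b / t) / (a / s) + (a / s) / (b / t) - 2) :=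
    (mul_le_mul_of_nonneg_right (min_sq_le_mul hs.le ht.le) (sq_nonneg _)).trans
      (mul_le_mul_of_nonneg_left (sq_log_sub_log_le hx hy) (mul_pos hs ht).le)
  rw [hlhs]
  linarith
end

section
/- Let g(x) = c·∏_{i=1}^d e^{−|x_i|} on ℝᵈ with c > 0. Then for all x, y ∈ ℝᵈ, (g(x)^{1/2} − g(y)^{1/2})² ≤ C·(|x−y|² ∧ 1)·(g(x) + g(y)) for some constant C depending only on d. -/
open Real Finset

private lemma one_sub_exp_le' (w : ℝ) (hw : 0 ≤ w) : 1 - Real.exp (-w) ≤ min w 1 := by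
  rcases le_total w 1 with h | h
  · rw [min_eq_left h]
    nlinarith [Real.add_one_le_exp (-w)]
  · rw [min_eq_right h]
    nlinarith [Real.exp_pos (-w)]

private lemma aux_mono (u v : ℝ) (h : u ≤ v) :
    (Real.exp (-u) - Real.exp (-v)) ^ 2
      ≤ min ((u - v) ^ 2) 1 * (Real.exp (-(2 * u)) + Real.exp (-(2 * v))) := by
  have hw : 0 ≤ v - u := by linarith
  have h1 : Real.exp (-u) - Real.exp (-v) = Real.exp (-u) * (1 - Real.exp (-(v - u))) := by
    rw [mul_sub, mul_one, ← Real.exp_add]; ring_nf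
  have h2 : 0 ≤ 1 - Real.exp (-(v - u)) := by
    have : Real.exp (-(v - u)) ≤ 1 := Real.exp_le_one_iff.mpr (by linarith)
    linarith
  have h3 : 1 - Real.exp (-(v - u)) ≤ min (v - u) 1 := one_sub_exp_le' _ hw
  have h4 : (1 - Real.exp (-(v - u))) ^ 2 ≤ min ((v - u) ^ 2) 1 := by
    have hm : 0 ≤ min (v - u) 1 := le_min hw zero_le_one
    have := sq_le_sq' (by linarith) h3
    calc (1 - Real.exp (-(v - u))) ^ 2 ≤ (min (v - u) 1) ^ 2 := this
      _ ≤ min ((v - u) ^ 2) 1 := by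
          rcases le_total (v - u) 1 with h' | h'
          · rw [min_eq_left h', min_eq_left (by nlinarith)]
          · rw [min_eq_right h', min_eq_right (by nlinarith)]; simp
  have h5 : Real.exp (-(2 * u)) = Real.exp (-u) ^ 2 := by
    rw [← Real.exp_nat_mul]; ring_nf
  have h6 : (u - v) ^ 2 = (v - u) ^ 2 := by ring
  rw [h1, mul_pow, h6]
  calc Real.exp (-u) ^ 2 * (1 - Real.exp (-(v - u))) ^ 2
      ≤ Real.exp (-u) ^ 2 * min ((v - u) ^ 2) 1 := by
        apply mul_le_mul_of_nonneg_left h4 (by positivity)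
    _ ≤ min ((v - u) ^ 2) 1 * (Real.exp (-(2 * u)) + Real.exp (-(2 * v))) := by
        rw [h5]
        nlinarith [Real.exp_pos (-(2 * v)), le_min (by positivity : (0:ℝ) ≤ (v-u)^2) zero_le_one,
          sq_nonneg (Real.exp (-u))]

private lemma aux_sym (u v : ℝ) :
    (Real.exp (-u) - Real.exp (-v)) ^ 2
      ≤ min ((u - v) ^ 2) 1 * (Real.exp (-(2 * u)) + Real.exp (-(2 * v))) := by
  rcases le_total u v with h | h
  · exact aux_mono u v h
  · have := aux_mono v u h
    have e1 : (Real.exp (-v) - Real.exp (-u)) ^ 2 = (Real.exp (-u) - Real.exp (-v)) ^ 2 := by ring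
    have e2 : (v - u) ^ 2 = (u - v) ^ 2 := by ring
    rw [e1, e2] at this
    linarith

theorem stmt_3 (d : ℕ) :
    ∃ C : ℝ, 0 < C ∧
      ∀ (c : ℝ), 0 < c →
        ∀ x y : EuclideanSpace ℝ (Fin d),
          (Real.sqrt (c * ∏ i, Real.exp (-|x i|)) - Real.sqrt (c * ∏ i, Real.exp (-|y i|))) ^ 2
            ≤ C * (min (‖x - y‖ ^ 2) 1) *
              (c * ∏ i, Real.exp (-|x i|) + c * ∏ i, Real.exp (-|y i|)) := by
  refine ⟨(d : ℝ) + 1, by positivity, ?_⟩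
  intro c hc x y
  set s := ∑ i, |x i| with hs
  set t := ∑ i, |y i| with ht
  have hx : (∏ i, Real.exp (-|x i|)) = Real.exp (-s) := by
    rw [← Real.exp_sum, hs, ← Finset.sum_neg_distrib]
  have hy : (∏ i, Real.exp (-|y i|)) = Real.exp (-t) := by
    rw [← Real.exp_sum, ht, ← Finset.sum_neg_distrib]
  have hsqx : Real.sqrt (c * ∏ i, Real.exp (-|x i|)) = Real.sqrt c * Real.exp (-(s / 2)) := by
    rw [hx, Real.sqrt_mul hc.le, ← Real.exp_half]; ring_nf
  have hsqy : Real.sqrt (c * ∏ i, Real.exp (-|y i|)) = Real.sqrt c * Real.exp (-(t / 2)) := by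
    rw [hy, Real.sqrt_mul hc.le, ← Real.exp_half]; ring_nf
  -- norm squared
  have hnorm : ‖x - y‖ ^ 2 = ∑ i, (x i - y i) ^ 2 := by
    rw [EuclideanSpace.norm_eq, Real.sq_sqrt (by positivity)]
    congr 1; ext i; simp [sq_abs]
  -- |s - t| bound
  have hst : (s - t) ^ 2 ≤ (d : ℝ) * ‖x - y‖ ^ 2 := by
    have h1 : |s - t| ≤ ∑ i, |x i - y i| := by
      rw [hs, ht, ← Finset.sum_sub_distrib]
      calc abs (∑ i, (|x i| - |y i|)) ≤ ∑ i, abs (|x i| - |y i|) := Finset.abs_sum_le_sum_abs _ _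
        _ ≤ ∑ i, |x i - y i| := Finset.sum_le_sum fun i _ => abs_abs_sub_abs_le_abs_sub _ _
    have h2 : (∑ i, |x i - y i|) ^ 2 ≤ (d : ℝ) * ∑ i, |x i - y i| ^ 2 := by
      simpa using sq_sum_le_card_mul_sum_sq (s := Finset.univ) (f := fun i => |x i - y i|)
    have h3 : (s - t) ^ 2 ≤ (∑ i, |x i - y i|) ^ 2 := by
      rw [← sq_abs (s - t)]
      exact pow_le_pow_left₀ (abs_nonneg _) h1 2
    rw [hnorm]
    simp only [sq_abs] at h2
    linarith
  -- min bound
  have hmin : min ((s / 2 - t / 2) ^ 2) 1 ≤ ((d : ℝ) + 1) * min (‖x - y‖ ^ 2) 1 := by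
    have hd : (s / 2 - t / 2) ^ 2 = (s - t) ^ 2 / 4 := by ring
    rcases le_total (‖x - y‖ ^ 2) 1 with h | h
    · rw [min_eq_left h]
      calc min ((s / 2 - t / 2) ^ 2) 1 ≤ (s / 2 - t / 2) ^ 2 := min_le_left _ _
        _ = (s - t) ^ 2 / 4 := hd
        _ ≤ (d : ℝ) * ‖x - y‖ ^ 2 / 4 := by linarith
        _ ≤ ((d : ℝ) + 1) * ‖x - y‖ ^ 2 := by nlinarith [sq_nonneg ‖x - y‖]
    · rw [min_eq_right h]
      calc min ((s / 2 - t / 2) ^ 2) 1 ≤ 1 := min_le_right _ _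
        _ ≤ ((d : ℝ) + 1) * 1 := by simp
  have key := aux_sym (s / 2) (t / 2)
  have e2s : Real.exp (-(2 * (s / 2))) = Real.exp (-s) := by ring_nf
  have e2t : Real.exp (-(2 * (t / 2))) = Real.exp (-t) := by ring_nf
  rw [e2s, e2t] at key
  have hexp : 0 ≤ Real.exp (-s) + Real.exp (-t) := by positivity
  have hmin0 : 0 ≤ min ((s / 2 - t / 2) ^ 2) 1 := le_min (by positivity) zero_le_one
  calc (Real.sqrt (c * ∏ i, Real.exp (-|x i|)) - Real.sqrt (c * ∏ i, Real.exp (-|y i|))) ^ 2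
      = c * (Real.exp (-(s / 2)) - Real.exp (-(t / 2))) ^ 2 := by
        rw [hsqx, hsqy, ← mul_sub, mul_pow, Real.sq_sqrt hc.le]
    _ ≤ c * (min ((s / 2 - t / 2) ^ 2) 1 * (Real.exp (-s) + Real.exp (-t))) := by
        exact mul_le_mul_of_nonneg_left key hc.le
    _ ≤ c * (((d : ℝ) + 1) * min (‖x - y‖ ^ 2) 1 * (Real.exp (-s) + Real.exp (-t))) := by
        apply mul_le_mul_of_nonneg_left _ hc.le
        exact mul_le_mul_of_nonneg_right hmin hexp
    _ = ((d : ℝ) + 1) * min (‖x - y‖ ^ 2) 1 *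
          (c * ∏ i, Real.exp (-|x i|) + c * ∏ i, Real.exp (-|y i|)) := by
        rw [hx, hy]; ring
end
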